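/- For n ≥ 4, the exponent set of PSC_n^{1,0} equals {2t : 1 ≤ t ≤ ⌊(n−1)/2⌋}. -/

import Mathlib

def IsPrimitive {n : ℕ} (A : Matrix (Fin n) (Fin n) ℝ) : Prop :=
  (∀ i j, 0 ≤ A i j) ∧ ∃ k : ℕ, 0 < k ∧ ∀ i j, 0 < (A ^ k) i j

def ExpIs {n : ℕ} (A : Matrix (Fin n) (Fin n) ℝ) (e : ℕ) : Prop :=
  IsLeast {k : ℕ | 0 < k ∧ ∀ i j, 0 < (A ^ k) i j} e

/-- A `(0,1)` companion matrix: superdiagonal entries `1` and all other entries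
`0` in the first `n-1` rows; last-row entries in `{0,1}`. -/
def IsCompanion {n : ℕ} (C : Matrix (Fin n) (Fin n) ℝ) : Prop :=
  ∀ i j : Fin n,
    if (i : ℕ) + 1 < n then (C i j = if (j : ℕ) = (i : ℕ) + 1 then 1 else 0)
    else (C i j = 0 ∨ C i j = 1)

/-- The set `C_n^{α,ε}` of symmetric companion matrices `C + Cᵀ` with
`c_{n,1} = α` and `c_{n,n} = ε`. -/
def companionClass (n : ℕ) (hn : 0 < n) (α ε : ℝ) :
    Set (Matrix (Fin n) (Fin n) ℝ) :=
  {A | ∃ C : Matrix (Fin n) (Fin n) ℝ, IsCompanion C ∧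
    C ⟨n - 1, by omega⟩ ⟨0, hn⟩ = α ∧ C ⟨n - 1, by omega⟩ ⟨n - 1, by omega⟩ = ε ∧
    A = C + C.transpose}

/-- `mRun S` : the maximum length of a run of consecutive integers contained in
`S` (`0` for the empty set). -/
noncomputable def mRun (S : Set ℕ) : ℕ := sSup {L : ℕ | ∃ a : ℕ, ∀ t, t < L → a + t ∈ S}

/-- The exponent set of a family of matrices. -/
def expSet {n : ℕ} (X : Set (Matrix (Fin n) (Fin n) ℝ)) : Set ℕ :=
  {e | ∃ A ∈ X, IsPrimitive A ∧ ExpIs A e}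

/-! Read `C + Cᵀ` as a graph on `0, …, n - 1`: the path `0 — 1 — ⋯ — (n - 1)` together with
chords from `v = n - 1` to the columns where the last row of `C` is `1` (these include `0` and
exclude `v`). Every edge away from `v` changes the parity of the index, so a walk of the "wrong"
parity passes through `v`. Splitting odd closed walks at `v` shows that an odd exponent `e` would
already give `A ^ (e - 1) > 0`, so exponents are even. They are at most `2 ⌊(n - 1) / 2⌋`, because
any two vertices are joined by an even walk of length `≤ n - 1`: for odd `n` through the chord
`v — 0`, for even `n` through a chord from `v` to an odd column, which exists since otherwise the
graph would be bipartite. Conversely, with chords exactly to `0, …, n - 2t`, collapsing these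
columns maps the graph onto the `2t`-cycle with a loop, whose exponent is `2t`; this bounds the
exponent from below, and explicit walks through `v` bound it from above. -/

open scoped Matrix

namespace Matrix

variable {ι : Type*} [Fintype ι] [DecidableEq ι] {A : Matrix ι ι ℝ} {x y z : ι} {k l : ℕ}

theorem pow_zero_apply_pos_iff : 0 < (A ^ 0) x y ↔ x = y := by
  by_cases h : x = y <;> simp [h]

theorem pow_add_apply_pos_iff (hA : ∀ i j, 0 ≤ A i j) :
    0 < (A ^ (k + l)) x z ↔ ∃ y, 0 < (A ^ k) x y ∧ 0 < (A ^ l) y z := by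
  have hk := pow_apply_nonneg hA k
  have hl := pow_apply_nonneg hA l
  rw [pow_add, mul_apply, Finset.sum_pos_iff_of_nonneg fun y _ => mul_nonneg (hk x y) (hl y z)]
  simp only [Finset.mem_univ, true_and]
  refine exists_congr fun y => ⟨fun h => ⟨?_, ?_⟩, fun h => mul_pos h.1 h.2⟩
  · exact (hk x y).lt_of_ne fun h0 => by simp [← h0] at h
  · exact (hl y z).lt_of_ne fun h0 => by simp [← h0] at h

theorem pow_add_apply_pos (hA : ∀ i j, 0 ≤ A i j) (h₁ : 0 < (A ^ k) x y)
    (h₂ : 0 < (A ^ l) y z) : 0 < (A ^ (k + l)) x z :=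
  (pow_add_apply_pos_iff hA).2 ⟨y, h₁, h₂⟩

theorem pow_succ_apply_pos (hA : ∀ i j, 0 ≤ A i j) (h₁ : 0 < (A ^ k) x y) (h₂ : 0 < A y z) :
    0 < (A ^ (k + 1)) x z :=
  pow_add_apply_pos hA h₁ (by rwa [pow_one])

theorem exists_of_pow_succ_apply_pos (hA : ∀ i j, 0 ≤ A i j) (h : 0 < (A ^ (k + 1)) x z) :
    ∃ y, 0 < (A ^ k) x y ∧ 0 < A y z := by
  simpa only [pow_one] using (pow_add_apply_pos_iff hA).1 h

theorem IsSymm.pow_apply_pos (hS : A.IsSymm) (h : 0 < (A ^ k) x y) : 0 < (A ^ k) y x := by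
  rwa [(hS.pow k).apply]

theorem pow_add_two_apply_pos (hA : ∀ i j, 0 ≤ A i j) (hS : A.IsSymm) (hnb : ∀ i, ∃ j, 0 < A i j)
    (h : 0 < (A ^ k) x y) : 0 < (A ^ (k + 2)) x y := by
  obtain ⟨z, hz⟩ := hnb y
  exact pow_succ_apply_pos hA (pow_succ_apply_pos hA h hz) (by rwa [hS.apply])

theorem pow_apply_pos_of_le (hA : ∀ i j, 0 ≤ A i j) (hS : A.IsSymm) (hnb : ∀ i, ∃ j, 0 < A i j)
    (h : 0 < (A ^ k) x y) (hkl : k ≤ l) (hpar : k % 2 = l % 2) : 0 < (A ^ l) x y := by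
  obtain ⟨d, rfl⟩ : ∃ d, l = k + 2 * d := ⟨(l - k) / 2, by omega⟩
  clear hkl hpar
  induction d with
  | zero => simpa using h
  | succ d ih => exact pow_add_two_apply_pos hA hS hnb ih

theorem pow_apply_pos_parity (hA : ∀ i j, 0 ≤ A i j) (p : ι → ℕ)
    (hp : ∀ i j, 0 < A i j → (p i + p j) % 2 = 1) (h : 0 < (A ^ l) x y) :
    (l + p x + p y) % 2 = 0 := by
  induction l generalizing y with
  | zero => rw [pow_zero_apply_pos_iff.1 h]; omega
  | succ l ih =>
    obtain ⟨z, hz, hzy⟩ := exists_of_pow_succ_apply_pos hA h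
    have := ih hz
    have := hp z y hzy
    omega

theorem not_forall_pow_apply_pos_of_parity (hA : ∀ i j, 0 ≤ A i j) (p : ι → ℕ)
    (hp : ∀ i j, 0 < A i j → (p i + p j) % 2 = 1) (hxy : (p x + p y) % 2 = 1) (k : ℕ) :
    ¬ ∀ i j, 0 < (A ^ k) i j := fun h => by
  have := pow_apply_pos_parity hA p hp (h x x)
  have := pow_apply_pos_parity hA p hp (h x y)
  omega

theorem pow_apply_pos_parity_or_exists_through (hA : ∀ i j, 0 ≤ A i j) (p : ι → ℕ) (v : ι)
    (hp : ∀ i j, i ≠ v → j ≠ v → 0 < A i j → (p i + p j) % 2 = 1) (h : 0 < (A ^ l) x y) :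
    (l + p x + p y) % 2 = 0 ∨
      ∃ a b, a + b ≤ l ∧ (a + b) % 2 = l % 2 ∧ 0 < (A ^ a) x v ∧ 0 < (A ^ b) v y := by
  induction l generalizing y with
  | zero => rw [pow_zero_apply_pos_iff.1 h]; omega
  | succ l ih =>
    obtain ⟨z, hz, hzy⟩ := exists_of_pow_succ_apply_pos hA h
    by_cases hy : y = v
    · subst hy
      exact Or.inr ⟨l + 1, 0, le_rfl, rfl, h, pow_zero_apply_pos_iff.2 rfl⟩
    by_cases hzv : z = v
    · subst hzv
      exact Or.inr ⟨l, 1, le_rfl, rfl, hz, by rwa [pow_one]⟩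
    rcases ih hz with hpar | ⟨a, b, hab, hpar, hxv, hvz⟩
    · have := hp z y hzv hy hzy
      omega
    · exact Or.inr ⟨a, b + 1, by omega, by omega, hxv, pow_succ_apply_pos hA hvz hzy⟩

theorem pow_pred_apply_pos_of_odd (hA : ∀ i j, 0 ≤ A i j) (hS : A.IsSymm)
    (hnb : ∀ i, ∃ j, 0 < A i j) (p : ι → ℕ) (v : ι)
    (hp : ∀ i j, i ≠ v → j ≠ v → 0 < A i j → (p i + p j) % 2 = 1) {e : ℕ} (he : e % 2 = 1)
    (h : ∀ i j, 0 < (A ^ e) i j) (x y : ι) : 0 < (A ^ (e - 1)) x y := by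
  have split : ∀ z, ∃ a b, a + b ≤ e ∧ (a + b) % 2 = 1 ∧ 0 < (A ^ a) z v ∧ 0 < (A ^ b) z v := by
    intro z
    rcases pow_apply_pos_parity_or_exists_through hA p v hp (h z z) with
      hpar | ⟨a, b, hab, hpar, hzv, hvz⟩
    · omega
    · exact ⟨a, b, hab, by omega, hzv, hS.pow_apply_pos hvz⟩
  have join : ∀ {c d}, 0 < (A ^ c) x v → 0 < (A ^ d) y v → c + d ≤ e - 1 → (c + d) % 2 = 0 →
      0 < (A ^ (e - 1)) x y := fun hc hd hle hpar =>
    pow_apply_pos_of_le hA hS hnb (pow_add_apply_pos hA hc (hS.pow_apply_pos hd)) hle (by omega)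
  obtain ⟨a₁, b₁, hle₁, hpar₁, ha₁, hb₁⟩ := split x
  obtain ⟨a₂, b₂, hle₂, hpar₂, ha₂, hb₂⟩ := split y
  -- `a₁, b₁` have opposite parities, as do `a₂, b₂`; so two of the four sums below are even,
  -- and as they add up to at most `2e`, one of them is at most `e - 1`.
  rcases (by omega : (a₁ + a₂ ≤ e - 1 ∧ (a₁ + a₂) % 2 = 0) ∨
      (a₁ + b₂ ≤ e - 1 ∧ (a₁ + b₂) % 2 = 0) ∨ (b₁ + a₂ ≤ e - 1 ∧ (b₁ + a₂) % 2 = 0) ∨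
      (b₁ + b₂ ≤ e - 1 ∧ (b₁ + b₂) % 2 = 0)) with
    ⟨hle, hpar⟩ | ⟨hle, hpar⟩ | ⟨hle, hpar⟩ | ⟨hle, hpar⟩
  · exact join ha₁ ha₂ hle hpar
  · exact join ha₁ hb₂ hle hpar
  · exact join hb₁ ha₂ hle hpar
  · exact join hb₁ hb₂ hle hpar

end Matrix

namespace IsCompanion

variable {n : ℕ} {C : Matrix (Fin n) (Fin n) ℝ}

theorem apply_eq_zero_or_one (hC : IsCompanion C) (i j : Fin n) : C i j = 0 ∨ C i j = 1 := by
  have := hC i j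
  split_ifs at this <;> simp_all

theorem apply_nonneg (hC : IsCompanion C) (i j : Fin n) : 0 ≤ C i j := by
  rcases hC.apply_eq_zero_or_one i j with h | h <;> simp [h]

theorem add_transpose_nonneg (hC : IsCompanion C) (i j : Fin n) : 0 ≤ (C + Cᵀ) i j :=
  add_nonneg (hC.apply_nonneg i j) (hC.apply_nonneg j i)

theorem add_transpose_pos_of_apply_eq_one (hC : IsCompanion C) {i j : Fin n} (h : C i j = 1) :
    0 < (C + Cᵀ) i j := by
  have := hC.apply_nonneg j i
  simp only [Matrix.add_apply, Matrix.transpose_apply, h]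
  linarith

theorem apply_of_lt (hC : IsCompanion C) {i : Fin n} (hi : (i : ℕ) + 1 < n) (j : Fin n) :
    C i j = if (j : ℕ) = i + 1 then 1 else 0 := by
  simpa [hi] using hC i j

theorem add_transpose_pos_of_succ (hC : IsCompanion C) {i j : Fin n} (h : (i : ℕ) + 1 = j) :
    0 < (C + Cᵀ) i j :=
  hC.add_transpose_pos_of_apply_eq_one (by rw [hC.apply_of_lt (by omega) j, if_pos h.symm])

theorem succ_eq_or_of_add_transpose_pos (hC : IsCompanion C) {i j : Fin n}
    (hi : (i : ℕ) + 1 < n) (hj : (j : ℕ) + 1 < n) (h : 0 < (C + Cᵀ) i j) :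
    (i : ℕ) + 1 = j ∨ (j : ℕ) + 1 = i := by
  rw [Matrix.add_apply, Matrix.transpose_apply, hC.apply_of_lt hi, hC.apply_of_lt hj] at h
  split_ifs at h <;> first | omega | norm_num at h

theorem eq_or_apply_eq_one_of_add_transpose_pos (hC : IsCompanion C) {v y : Fin n}
    (hy : (y : ℕ) + 1 < n) (h : 0 < (C + Cᵀ) v y) : (v : ℕ) = y + 1 ∨ C v y = 1 := by
  rw [Matrix.add_apply, Matrix.transpose_apply, hC.apply_of_lt hy] at h
  rcases hC.apply_eq_zero_or_one v y with h0 | h1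
  · rw [h0] at h
    split_ifs at h with hvy
    · exact Or.inl hvy
    · norm_num at h
  · exact Or.inr h1

theorem exists_add_transpose_pos (hC : IsCompanion C) (hn : 2 ≤ n) (i : Fin n) :
    ∃ j, 0 < (C + Cᵀ) i j := by
  by_cases hi : (i : ℕ) + 1 < n
  · exact ⟨⟨i + 1, hi⟩, hC.add_transpose_pos_of_succ rfl⟩
  · refine ⟨⟨i - 1, by omega⟩, ?_⟩
    rw [← (Matrix.isSymm_add_transpose_self C).apply]
    exact hC.add_transpose_pos_of_succ (by dsimp only; omega)

theorem pow_sub_apply_pos (hC : IsCompanion C) {x y : Fin n} (hxy : (x : ℕ) ≤ y) :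
    0 < ((C + Cᵀ) ^ ((y : ℕ) - x)) x y := by
  obtain ⟨d, hd⟩ : ∃ d, (y : ℕ) = x + d := ⟨y - x, by omega⟩
  rw [hd, Nat.add_sub_cancel_left]
  clear hxy
  induction d generalizing y with
  | zero => exact Matrix.pow_zero_apply_pos_iff.2 (Fin.ext hd.symm)
  | succ d ih =>
    exact Matrix.pow_succ_apply_pos hC.add_transpose_nonneg (ih (y := ⟨x + d, by omega⟩) rfl)
      (hC.add_transpose_pos_of_succ (by dsimp only; omega))

theorem pow_dist_apply_pos (hC : IsCompanion C) (x y : Fin n) :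
    0 < ((C + Cᵀ) ^ ((x : ℕ) - y + (y - x))) x y := by
  rcases le_total (x : ℕ) y with hxy | hxy
  · simpa [Nat.sub_eq_zero_of_le hxy] using hC.pow_sub_apply_pos hxy
  · simpa [Nat.sub_eq_zero_of_le hxy] using
      (Matrix.isSymm_add_transpose_self C).pow_apply_pos (hC.pow_sub_apply_pos hxy)

theorem pow_apply_pos_via (hC : IsCompanion C) {a b : Fin n} (hab : 0 < (C + Cᵀ) a b)
    (x y : Fin n) :
    0 < ((C + Cᵀ) ^ ((x : ℕ) - a + (a - x) + 1 + ((b : ℕ) - y + (y - b)))) x y :=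
  Matrix.pow_add_apply_pos hC.add_transpose_nonneg
    (Matrix.pow_succ_apply_pos hC.add_transpose_nonneg (hC.pow_dist_apply_pos x a) hab)
    (hC.pow_dist_apply_pos b y)

variable {v : Fin n}

theorem add_transpose_parity_of_ne (hC : IsCompanion C) (hv : (v : ℕ) + 1 = n) (i j : Fin n)
    (hi : i ≠ v) (hj : j ≠ v) (h : 0 < (C + Cᵀ) i j) : ((i : ℕ) + j) % 2 = 1 := by
  have := Fin.val_ne_of_ne hi
  have := Fin.val_ne_of_ne hj
  rcases hC.succ_eq_or_of_add_transpose_pos (by omega) (by omega) h with h | h <;> omega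

theorem expIs_even (hC : IsCompanion C) (hn : 4 ≤ n) (hv : (v : ℕ) + 1 = n) {e : ℕ}
    (he : ExpIs (C + Cᵀ) e) : e % 2 = 0 := by
  have hp := hC.add_transpose_parity_of_ne hv
  by_contra hodd
  have hpred := Matrix.pow_pred_apply_pos_of_odd hC.add_transpose_nonneg
    (Matrix.isSymm_add_transpose_self C) (hC.exists_add_transpose_pos (by omega)) Fin.val v hp
    (by omega) he.1.2
  rcases Nat.lt_or_ge 1 e with h1 | h1
  · have := he.2 ⟨by omega, hpred⟩
    omega
  · have h02 := he.1.2 ⟨0, by omega⟩ ⟨2, by omega⟩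
    rw [show e = 1 by have := he.1.1; omega, pow_one] at h02
    have := hp _ _ (Fin.ne_of_val_ne (by dsimp only; omega)) (Fin.ne_of_val_ne (by dsimp only; omega)) h02
    simp at this

theorem exists_odd_add_transpose_pos (hC : IsCompanion C) (hv : (v : ℕ) + 1 = n)
    (hε : C v v = 0) (hn : n % 2 = 0) (hprim : IsPrimitive (C + Cᵀ)) :
    ∃ j : Fin n, (j : ℕ) % 2 = 1 ∧ (j : ℕ) + 1 < n ∧ 0 < (C + Cᵀ) v j := by
  by_contra! hcon
  have hS := Matrix.isSymm_add_transpose_self C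
  have hflip_v : ∀ j, 0 < (C + Cᵀ) v j → ((v : ℕ) + j) % 2 = 1 := by
    intro j hj
    have hjv : j ≠ v := by
      rintro rfl
      simp [hε] at hj
    have := Fin.val_ne_of_ne hjv
    by_contra h
    exact (hcon j (by omega) (by omega)).not_gt hj
  have hflip : ∀ i j, 0 < (C + Cᵀ) i j → ((i : ℕ) + j) % 2 = 1 := by
    intro i j h
    by_cases hi : i = v
    · subst hi
      exact hflip_v j h
    by_cases hj : j = v
    · subst hj
      have := hflip_v i (by rwa [hS.apply])
      omega
    exact hC.add_transpose_parity_of_ne hv i j hi hj h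
  obtain ⟨-, k, -, hk⟩ := hprim
  exact Matrix.not_forall_pow_apply_pos_of_parity hC.add_transpose_nonneg Fin.val hflip
    (x := ⟨0, by omega⟩) (y := ⟨1, by omega⟩) (by simp) k hk

theorem exists_even_pow_apply_pos (hC : IsCompanion C) (hv : (v : ℕ) + 1 = n)
    (hα : C v ⟨0, v.pos⟩ = 1) (hε : C v v = 0) (hprim : IsPrimitive (C + Cᵀ)) {x y : Fin n}
    (hxy : (x : ℕ) ≤ y) : ∃ l, l ≤ n - 1 ∧ l % 2 = 0 ∧ 0 < ((C + Cᵀ) ^ l) x y := by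
  have hS := Matrix.isSymm_add_transpose_self C
  have := y.isLt
  set o : Fin n := ⟨0, v.pos⟩
  have ho : (o : ℕ) = 0 := rfl
  have hov : 0 < (C + Cᵀ) o v := by
    rw [hS.apply]
    exact hC.add_transpose_pos_of_apply_eq_one hα
  by_cases hpar : ((x : ℕ) + y) % 2 = 0
  · exact ⟨_, by omega, by omega, hC.pow_sub_apply_pos hxy⟩
  by_cases hn : n % 2 = 1
  · exact ⟨_, by omega, by omega, hC.pow_apply_pos_via hov x y⟩
  obtain ⟨j, hj, hjn, hvj⟩ := hC.exists_odd_add_transpose_pos hv hε (by omega) hprim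
  have hjv : 0 < (C + Cᵀ) j v := by rwa [hS.apply]
  by_cases hjx : (j : ℕ) ≤ x ∨ (y : ℕ) + 1 = n
  · exact ⟨_, by omega, by omega, hC.pow_apply_pos_via hjv x y⟩
  · exact ⟨_, by omega, by omega, Matrix.pow_add_apply_pos hC.add_transpose_nonneg
      (hC.pow_apply_pos_via hov x v) (hC.pow_apply_pos_via hvj v y)⟩

theorem pow_two_mul_half_apply_pos (hC : IsCompanion C) (hn : 2 ≤ n) (hv : (v : ℕ) + 1 = n)
    (hα : C v ⟨0, v.pos⟩ = 1) (hε : C v v = 0) (hprim : IsPrimitive (C + Cᵀ)) (x y : Fin n) :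
    0 < ((C + Cᵀ) ^ (2 * ((n - 1) / 2))) x y := by
  have hS := Matrix.isSymm_add_transpose_self C
  have hK : ∀ {x y : Fin n}, (x : ℕ) ≤ y → 0 < ((C + Cᵀ) ^ (2 * ((n - 1) / 2))) x y :=
    fun hxy => by
      obtain ⟨l, hl, hl2, h⟩ := hC.exists_even_pow_apply_pos hv hα hε hprim hxy
      exact Matrix.pow_apply_pos_of_le hC.add_transpose_nonneg hS
        (hC.exists_add_transpose_pos hn) h (by omega) (by omega)
  rcases le_total (x : ℕ) y with hxy | hxy
  · exact hK hxy
  · exact hS.pow_apply_pos (hK hxy)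

end IsCompanion

def chordCompanion (n t : ℕ) : Matrix (Fin n) (Fin n) ℝ :=
  Matrix.of fun i j =>
    if (i : ℕ) + 1 < n then (if (j : ℕ) = (i : ℕ) + 1 then 1 else 0)
    else (if (j : ℕ) ≤ n - 2 * t then 1 else 0)

theorem chordCompanion_isCompanion (n t : ℕ) : IsCompanion (chordCompanion n t) := by
  intro i j
  by_cases h : (i : ℕ) + 1 < n
  · simp [chordCompanion, h]
  · simp only [chordCompanion, Matrix.of_apply, if_neg h]
    split_ifs <;> simp

/-- The `2t`-cycle `0 — 1 — ⋯ — (2t - 1) — 0` with a loop at `0`. Sending column `j` of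
`chordCompanion n t` to `j - (n - 2t)` (truncated) maps its graph onto this one. -/
def cycleLoopAdj (t a b : ℕ) : Prop :=
  (a = 0 ∧ b = 0) ∨ a + 1 = b ∨ b + 1 = a ∨ (a = 2 * t - 1 ∧ b = 0) ∨ (b = 2 * t - 1 ∧ a = 0)

/-- The least length of a walk of parity `p` from `2t - 1` to `q` in `cycleLoopAdj t`: the cycle
distance if `p` is the parity of `2t - 1 - q`, otherwise the length of the shortest walk using the
loop. -/
def cycleLoopDist (t p q : ℕ) : ℕ :=
  if (p + q + 1) % 2 = 0 then min (q + 1) (2 * t - 1 - q) else 2 + min q (2 * t - q)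

theorem cycleLoopDist_succ_le {t p q r : ℕ} (ht : 1 ≤ t) (hq : q ≤ 2 * t - 1)
    (hr : r ≤ 2 * t - 1) (hrq : cycleLoopAdj t r q) :
    cycleLoopDist t ((p + 1) % 2) q ≤ cycleLoopDist t (p % 2) r + 1 := by
  unfold cycleLoopAdj at hrq
  unfold cycleLoopDist
  split_ifs <;> omega

section chordCompanion

variable {n t : ℕ} {v : Fin n}

theorem chordCompanion_apply_last (hv : (v : ℕ) + 1 = n) (j : Fin n) :
    chordCompanion n t v j = if (j : ℕ) ≤ n - 2 * t then 1 else 0 := by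
  simp [chordCompanion, show ¬ (v : ℕ) + 1 < n by omega]

theorem chordCompanion_add_transpose_pos_last (hv : (v : ℕ) + 1 = n) {j : Fin n}
    (hj : (j : ℕ) ≤ n - 2 * t) :
    0 < (chordCompanion n t + (chordCompanion n t)ᵀ) v j :=
  (chordCompanion_isCompanion n t).add_transpose_pos_of_apply_eq_one
    (by rw [chordCompanion_apply_last hv, if_pos hj])

theorem chordCompanion_pow_sub_add_one_apply_pos (hv : (v : ℕ) + 1 = n)
    (y : Fin n) :
    0 < ((chordCompanion n t + (chordCompanion n t)ᵀ) ^ ((y : ℕ) - (n - 2 * t) + 1)) v y := by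
  have := (chordCompanion_isCompanion n t).pow_apply_pos_via
    (chordCompanion_add_transpose_pos_last hv (j := ⟨min y (n - 2 * t), by omega⟩)
      (by simp)) v y
  convert this using 2
  dsimp only
  omega

theorem chordCompanion_pow_sub_add_two_apply_pos (ht : 1 ≤ t) (htn : 2 * t < n)
    (hv : (v : ℕ) + 1 = n) (y : Fin n) :
    0 < ((chordCompanion n t + (chordCompanion n t)ᵀ) ^ ((y : ℕ) - (n - 2 * t) + 2)) v y := by
  have := (chordCompanion_isCompanion n t).pow_apply_pos_via
    (chordCompanion_add_transpose_pos_last hv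
      (j := ⟨if (y : ℕ) = 0 then 1 else min (y : ℕ) (n - 2 * t) - 1, by split_ifs <;> omega⟩)
      (by simp only; split_ifs <;> omega)) v y
  convert this using 2
  dsimp only
  split_ifs <;> omega

theorem chordCompanion_pow_two_mul_apply_pos (ht : 1 ≤ t) (htn : 2 * t < n) (x y : Fin n) :
    0 < ((chordCompanion n t + (chordCompanion n t)ᵀ) ^ (2 * t)) x y := by
  set A := chordCompanion n t + (chordCompanion n t)ᵀ
  set v : Fin n := ⟨n - 1, by omega⟩
  have hv : (v : ℕ) + 1 = n := by simp only [v]; omega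
  have hC := chordCompanion_isCompanion n t
  have hS := Matrix.isSymm_add_transpose_self (chordCompanion n t)
  have one := chordCompanion_pow_sub_add_one_apply_pos (t := t) hv
  have two := chordCompanion_pow_sub_add_two_apply_pos ht htn hv
  have far : ∀ y : Fin n, 0 < (A ^ ((v : ℕ) - y)) v y := fun y =>
    hS.pow_apply_pos (hC.pow_sub_apply_pos (by omega))
  have join : ∀ {a b}, 0 < (A ^ a) v x → 0 < (A ^ b) v y → a + b ≤ 2 * t → (a + b) % 2 = 0 →
      0 < (A ^ (2 * t)) x y := fun hx hy hle hpar =>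
    Matrix.pow_apply_pos_of_le hC.add_transpose_nonneg hS (hC.exists_add_transpose_pos (by omega))
      (Matrix.pow_add_apply_pos hC.add_transpose_nonneg (hS.pow_apply_pos hx) hy) hle (by omega)
  have := x.isLt
  have := y.isLt
  by_cases hnear : (x : ℕ) - (n - 2 * t) + ((y : ℕ) - (n - 2 * t)) + 2 ≤ 2 * t
  · by_cases hpar : ((x : ℕ) - (n - 2 * t) + ((y : ℕ) - (n - 2 * t))) % 2 = 0
    · exact join (one x) (one y) (by omega) (by omega)
    · exact join (one x) (two y) (by omega) (by omega)
  · by_cases hpar : ((x : ℕ) - (n - 2 * t) + ((y : ℕ) - (n - 2 * t))) % 2 = 0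
    · exact join (far x) (far y) (by omega) (by omega)
    · rcases Nat.lt_or_ge (x : ℕ) y with hxy | hxy
      · exact join (two x) (far y) (by omega) (by omega)
      · exact join (far x) (two y) (by omega) (by omega)

theorem chordCompanion_adj_last (ht : 1 ≤ t) (htn : 2 * t < n) (hv : (v : ℕ) + 1 = n) {y : Fin n}
    (h : 0 < (chordCompanion n t + (chordCompanion n t)ᵀ) v y) :
    (v : ℕ) = y + 1 ∨ (y : ℕ) ≤ n - 2 * t := by
  have hyv : y ≠ v := by
    rintro rfl
    rw [Matrix.add_apply, Matrix.transpose_apply, chordCompanion_apply_last hv,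
      if_neg (by omega)] at h
    norm_num at h
  have := Fin.val_ne_of_ne hyv
  rcases (chordCompanion_isCompanion n t).eq_or_apply_eq_one_of_add_transpose_pos
    (by omega) h with h | h
  · exact Or.inl h
  · rw [chordCompanion_apply_last hv] at h
    split_ifs at h with hy
    · exact Or.inr hy
    · norm_num at h

theorem chordCompanion_cycleLoopAdj (ht : 1 ≤ t) (htn : 2 * t < n) {y z : Fin n}
    (h : 0 < (chordCompanion n t + (chordCompanion n t)ᵀ) z y) :
    cycleLoopAdj t ((z : ℕ) - (n - 2 * t)) ((y : ℕ) - (n - 2 * t)) := by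
  have hS := Matrix.isSymm_add_transpose_self (chordCompanion n t)
  have := y.isLt
  have := z.isLt
  unfold cycleLoopAdj
  by_cases hz : (z : ℕ) + 1 = n
  · have := chordCompanion_adj_last ht htn hz h
    omega
  by_cases hy : (y : ℕ) + 1 = n
  · have := chordCompanion_adj_last ht htn hy (by rwa [hS.apply])
    omega
  rcases (chordCompanion_isCompanion n t).succ_eq_or_of_add_transpose_pos (by omega) (by omega) h
    with h | h <;> omega

theorem cycleLoopDist_le_of_pow_apply_pos (ht : 1 ≤ t) (htn : 2 * t < n) (hv : (v : ℕ) + 1 = n)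
    {l : ℕ} {y : Fin n} (h : 0 < ((chordCompanion n t + (chordCompanion n t)ᵀ) ^ l) v y) :
    cycleLoopDist t (l % 2) ((y : ℕ) - (n - 2 * t)) ≤ l := by
  induction l generalizing y with
  | zero =>
    rw [← Matrix.pow_zero_apply_pos_iff.1 h]
    unfold cycleLoopDist
    split_ifs <;> omega
  | succ l ih =>
    obtain ⟨z, hz, hzy⟩ :=
      Matrix.exists_of_pow_succ_apply_pos (chordCompanion_isCompanion n t).add_transpose_nonneg h
    have := ih hz
    have := y.isLt
    have := z.isLt
    have := cycleLoopDist_succ_le (p := l) ht (by omega) (by omega)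
      (chordCompanion_cycleLoopAdj ht htn hzy)
    omega

theorem chordCompanion_not_forall_pow_apply_pos (ht : 1 ≤ t) (htn : 2 * t < n) {k : ℕ}
    (hk0 : 0 < k) (hk : k < 2 * t) :
    ¬ ∀ i j, 0 < ((chordCompanion n t + (chordCompanion n t)ᵀ) ^ k) i j := by
  intro h
  have hC := chordCompanion_isCompanion n t
  set v : Fin n := ⟨n - 1, by omega⟩
  have hv : (v : ℕ) + 1 = n := by simp only [v]; omega
  -- `b = a` for odd `k` and `b = a + 1` for even `k`: a walk `a → b` of length `k` has the wrong
  -- parity, so it passes through `v`, and `cycleLoopDist` bounds both halves.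
  let a : Fin n := ⟨n - t, by omega⟩
  let b : Fin n := ⟨n - t + (k + 1) % 2, by omega⟩
  have ha : (a : ℕ) - (n - 2 * t) = t := by simp only [a]; omega
  have hb : (b : ℕ) - (n - 2 * t) = t + (k + 1) % 2 := by simp only [b]; omega
  rcases Matrix.pow_apply_pos_parity_or_exists_through hC.add_transpose_nonneg Fin.val v
      (hC.add_transpose_parity_of_ne hv) (h a b) with hpar | ⟨c, d, hcd, hpar, hav, hvb⟩
  · simp only [a, b] at hpar
    omega
  have hc := cycleLoopDist_le_of_pow_apply_pos ht htn hv
    ((Matrix.isSymm_add_transpose_self _).pow_apply_pos hav)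
  have hd := cycleLoopDist_le_of_pow_apply_pos ht htn hv hvb
  rw [ha] at hc
  rw [hb] at hd
  unfold cycleLoopDist at hc hd
  split_ifs at hc hd <;> omega

theorem expIs_chordCompanion (ht : 1 ≤ t) (htn : 2 * t < n) :
    ExpIs (chordCompanion n t + (chordCompanion n t)ᵀ) (2 * t) :=
  ⟨⟨by omega, chordCompanion_pow_two_mul_apply_pos ht htn⟩, fun k ⟨hk0, hk⟩ => by
    by_contra! hlt
    exact chordCompanion_not_forall_pow_apply_pos ht htn hk0 hlt hk⟩

end chordCompanion

/-- For `n ≥ 4`, `E(PSC_n^{1,0}) = {2t : 1 ≤ t ≤ ⌊(n-1)/2⌋}`. -/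
theorem expSet_PSC_one_zero {n : ℕ} (hn : 4 ≤ n) :
    expSet (companionClass n (by omega) 1 0) =
      {e : ℕ | ∃ t : ℕ, 1 ≤ t ∧ t ≤ (n - 1) / 2 ∧ e = 2 * t} := by
  ext e
  simp only [expSet, companionClass, Set.mem_ofPred_eq]
  have hv : ((⟨n - 1, by omega⟩ : Fin n) : ℕ) + 1 = n := by simp only; omega
  constructor
  · rintro ⟨_, ⟨C, hC, hα, hε, rfl⟩, hprim, he⟩
    have heven := hC.expIs_even hn hv he
    have hle := he.2 ⟨by omega, hC.pow_two_mul_half_apply_pos (by omega) hv hα hε hprim⟩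
    exact ⟨e / 2, by have := he.1.1; omega, by omega, by omega⟩
  · rintro ⟨t, ht, hth, rfl⟩
    have htn : 2 * t < n := by omega
    refine ⟨_, ⟨chordCompanion n t, chordCompanion_isCompanion n t, ?_, ?_, rfl⟩,
      ⟨(chordCompanion_isCompanion n t).add_transpose_nonneg, 2 * t, by omega,
        chordCompanion_pow_two_mul_apply_pos ht htn⟩, expIs_chordCompanion ht htn⟩
    · rw [chordCompanion_apply_last hv, if_pos (Nat.zero_le _)]
    · rw [chordCompanion_apply_last hv, if_neg (by simp only; omega)]
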